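/- For every real u with u < a or u > b, the boundary values of g from the two half-planes cancel: lim_{ε→0⁺} ( g(u+iε) + g(u−iε) ) = 0. -/

import Mathlib

open Complex Filter Real Set Topology

-- base tends within upper half plane
lemma base_plus (u c : ℝ) :
    Tendsto (fun ε : ℝ => (u : ℂ) + ε * I - c) (𝓝[>] 0)
      (𝓝[{z : ℂ | 0 ≤ z.im}] ((u : ℂ) - c)) := by
  rw [tendsto_nhdsWithin_iff]
  constructor
  · have : Tendsto (fun ε : ℝ => (u : ℂ) + ε * I - c) (𝓝 0) (𝓝 ((u : ℂ) - c)) := by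
      have hcont : Continuous (fun ε : ℝ => (u : ℂ) + ε * I - c) := by fun_prop
      simpa using hcont.tendsto 0
    exact this.mono_left nhdsWithin_le_nhds
  · filter_upwards [self_mem_nhdsWithin] with ε (hε : 0 < ε)
    simp [hε.le]

lemma base_minus (u c : ℝ) :
    Tendsto (fun ε : ℝ => (u : ℂ) - ε * I - c) (𝓝[>] 0)
      (𝓝[{z : ℂ | z.im < 0}] ((u : ℂ) - c)) := by
  rw [tendsto_nhdsWithin_iff]
  constructor
  · have : Tendsto (fun ε : ℝ => (u : ℂ) - ε * I - c) (𝓝 0) (𝓝 ((u : ℂ) - c)) := by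
      have hcont : Continuous (fun ε : ℝ => (u : ℂ) - ε * I - c) := by fun_prop
      simpa using hcont.tendsto 0
    exact this.mono_left nhdsWithin_le_nhds
  · filter_upwards [self_mem_nhdsWithin] with ε (hε : 0 < ε)
    simp [hε]

lemma sqrt_plus_neg (u c : ℝ) (h : u < c) :
    Tendsto (fun ε : ℝ => ((u : ℂ) + ε * I - c) ^ ((1:ℂ)/2)) (𝓝[>] 0)
      (𝓝 (Complex.exp ((Real.log (c - u) + π * I) * (1/2)))) := by
  have hre : ((u : ℂ) - c).re < 0 := by simp [h]
  have him : ((u : ℂ) - c).im = 0 := by simp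
  have hlog := Complex.tendsto_log_nhdsWithin_im_nonneg_of_re_neg_of_im_zero hre him
  have habs : ‖(u:ℂ) - c‖ = c - u := by
    rw [show (u:ℂ) - c = ((u - c : ℝ) : ℂ) by push_cast; ring, Complex.norm_real, Real.norm_eq_abs, abs_of_neg (by linarith)]
    ring
  rw [habs] at hlog
  have := ((hlog.comp (base_plus u c)).mul_const ((1:ℂ)/2)).cexp
  refine this.congr' ?_
  filter_upwards [self_mem_nhdsWithin] with ε (hε : 0 < ε)
  have hz : (u : ℂ) + ε * I - c ≠ 0 := by
    intro hzero
    have : ((u : ℂ) + ε * I - c).im = 0 := by rw [hzero]; simp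
    simp at this; linarith
  rw [Complex.cpow_def_of_ne_zero hz]
  rfl

lemma sqrt_minus_neg (u c : ℝ) (h : u < c) :
    Tendsto (fun ε : ℝ => ((u : ℂ) - ε * I - c) ^ ((1:ℂ)/2)) (𝓝[>] 0)
      (𝓝 (Complex.exp ((Real.log (c - u) - π * I) * (1/2)))) := by
  have hre : ((u : ℂ) - c).re < 0 := by simp [h]
  have him : ((u : ℂ) - c).im = 0 := by simp
  have hlog := Complex.tendsto_log_nhdsWithin_im_neg_of_re_neg_of_im_zero hre him
  have habs : ‖(u:ℂ) - c‖ = c - u := by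
    rw [show (u:ℂ) - c = ((u - c : ℝ) : ℂ) by push_cast; ring, Complex.norm_real, Real.norm_eq_abs, abs_of_neg (by linarith)]
    ring
  rw [habs] at hlog
  have := ((hlog.comp (base_minus u c)).mul_const ((1:ℂ)/2)).cexp
  refine this.congr' ?_
  filter_upwards [self_mem_nhdsWithin] with ε (hε : 0 < ε)
  have hz : (u : ℂ) - ε * I - c ≠ 0 := by
    intro hzero
    have : ((u : ℂ) - ε * I - c).im = 0 := by rw [hzero]; simp
    simp at this; linarith
  rw [Complex.cpow_def_of_ne_zero hz]
  rfl

lemma sqrt_plus_pos (u c : ℝ) (h : c < u) :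
    Tendsto (fun ε : ℝ => ((u : ℂ) + ε * I - c) ^ ((1:ℂ)/2)) (𝓝[>] 0)
      (𝓝 (((u : ℂ) - c) ^ ((1:ℂ)/2))) := by
  have hc : ContinuousAt (fun z : ℂ => z ^ ((1:ℂ)/2)) ((u:ℂ) - c) :=
    continuousAt_cpow_const (Or.inl (by simp [h]))
  have hb := ((base_plus u c).mono_right nhdsWithin_le_nhds)
  exact hc.tendsto.comp hb

lemma sqrt_minus_pos (u c : ℝ) (h : c < u) :
    Tendsto (fun ε : ℝ => ((u : ℂ) - ε * I - c) ^ ((1:ℂ)/2)) (𝓝[>] 0)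
      (𝓝 (((u : ℂ) - c) ^ ((1:ℂ)/2))) := by
  have hc : ContinuousAt (fun z : ℂ => z ^ ((1:ℂ)/2)) ((u:ℂ) - c) :=
    continuousAt_cpow_const (Or.inl (by simp [h]))
  have hb := ((base_minus u c).mono_right nhdsWithin_le_nhds)
  exact hc.tendsto.comp hb

/-- The g-function `g(z) = ∓i√(z−a)√(z−b)` (sign `−` on the closed upper half-plane,
`+` on the open lower half-plane), with principal branches of the square root. -/
noncomputable def gfun (a b : ℝ) (z : ℂ) : ℂ :=
  if 0 ≤ z.im then -Complex.I * (z - a) ^ ((1 : ℂ) / 2) * (z - b) ^ ((1 : ℂ) / 2)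
  else Complex.I * (z - a) ^ ((1 : ℂ) / 2) * (z - b) ^ ((1 : ℂ) / 2)

theorem gfun_boundary_values_cancel (a b : ℝ) (hab : a < b) (u : ℝ) (hu : u < a ∨ b < u) :
    Filter.Tendsto
      (fun ε : ℝ => gfun a b (↑u + ↑ε * Complex.I) + gfun a b (↑u - ↑ε * Complex.I))
      (nhdsWithin 0 (Set.Ioi 0)) (nhds 0) := by
  have hgf : ∀ᶠ ε : ℝ in 𝓝[>] 0,
      gfun a b (↑u + ↑ε * I) + gfun a b (↑u - ↑ε * I)
        = -I * (((u:ℂ) + ε * I - a) ^ ((1:ℂ)/2) * ((u:ℂ) + ε * I - b) ^ ((1:ℂ)/2))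
          + I * (((u:ℂ) - ε * I - a) ^ ((1:ℂ)/2) * ((u:ℂ) - ε * I - b) ^ ((1:ℂ)/2)) := by
    filter_upwards [self_mem_nhdsWithin] with ε (hε : 0 < ε)
    have h1 : (0:ℝ) ≤ ((u:ℂ) + ε * I).im := by simp [hε.le]
    have h2 : ¬ (0:ℝ) ≤ ((u:ℂ) - ε * I).im := by simp [hε]
    rw [gfun, gfun, if_pos h1, if_neg h2]
    ring
  rcases hu with h | h
  · have hb : u < b := h.trans hab
    have T := ((((sqrt_plus_neg u a h).mul (sqrt_plus_neg u b hb)).const_mul (-I)).add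
      (((sqrt_minus_neg u a h).mul (sqrt_minus_neg u b hb)).const_mul I))
    have hV : -I * (Complex.exp ((Real.log (a - u) + π * I) * (1/2)) *
          Complex.exp ((Real.log (b - u) + π * I) * (1/2)))
        + I * (Complex.exp ((Real.log (a - u) - π * I) * (1/2)) *
          Complex.exp ((Real.log (b - u) - π * I) * (1/2))) = 0 := by
      rw [← Complex.exp_add, ← Complex.exp_add]
      have e1 : ((Real.log (a - u) : ℂ) + π * I) * (1/2) + ((Real.log (b - u) : ℂ) + π * I) * (1/2)
          = ((Real.log (a - u) : ℂ) + Real.log (b - u)) * (1/2) + π * I := by ring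
      have e2 : ((Real.log (a - u) : ℂ) - π * I) * (1/2) + ((Real.log (b - u) : ℂ) - π * I) * (1/2)
          = ((Real.log (a - u) : ℂ) + Real.log (b - u)) * (1/2) - π * I := by ring
      rw [e1, e2, Complex.exp_add, Complex.exp_sub, Complex.exp_pi_mul_I]
      ring
    rw [hV] at T
    exact T.congr' (hgf.mono fun ε h => h.symm)
  · have ha : a < u := hab.trans h
    have T := ((((sqrt_plus_pos u a ha).mul (sqrt_plus_pos u b h)).const_mul (-I)).add
      (((sqrt_minus_pos u a ha).mul (sqrt_minus_pos u b h)).const_mul I))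
    have hV : -I * (((u:ℂ) - a) ^ ((1:ℂ)/2) * ((u:ℂ) - b) ^ ((1:ℂ)/2))
        + I * (((u:ℂ) - a) ^ ((1:ℂ)/2) * ((u:ℂ) - b) ^ ((1:ℂ)/2)) = 0 := by ring
    rw [hV] at T
    exact T.congr' (hgf.mono fun ε h => h.symm)
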